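/- arXiv:2104.05184 — 5 statements merged into one kernel-verified Lean document; each statement's English description precedes it below -/
import Mathlib

section
/- Let Φ ∈ ℝ^{T×K}, V ∈ ℝ^{J×K}, β ∈ ℝ^{q×K}, z ∈ ℝ^q, and s_1,…,s_K > 0. Let W = V⊙Φ be the column-wise Khatri-Rao product, and define the mean vector m = W βᵀ z ∈ ℝ^{J·T} and the matrix C = W · diag(s_1²,…,s_K²) · Wᵀ ∈ ℝ^{(J·T)×(J·T)}. Fix k ∈ {1,…,K} and real numbers c₁, c₂, c₃ with c₁c₂c₃ = 1. Let Φ′, V′, β′ be obtained from Φ, V, β by replacing the k-th columns with c₁Φ_k, c₂V_k, c₃β_k respectively (other columns unchanged), and let s′ be obtained from s by replacing s_k² with c₃²s_k². Then the rescaled mean m′ = (V′⊙Φ′)(β′)ᵀz equals m and the rescaled matrix C′ = (V′⊙Φ′)·diag((s′_1)²,…,(s′_K)²)·(V′⊙Φ′)ᵀ equals C. -/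
/-!
Rescaling column `k` by `c` is right multiplication by `diagonal (Pi.mulSingle k c)`, and such
diagonal factors pass through the Khatri-Rao product. Hence `W' = W D` and `β' = β E` with
diagonal `D, E`; the mean picks up `D E` and the covariance `D² diag(s'²)`, and both reduce to the
identity, resp. `diag(s²)`, because `c₁ c₂ c₃ = 1`.
-/

open Matrix

namespace Matrix

variable {R ι m n : Type*} [CommSemiring R]

def khatriRao (A : Matrix m ι R) (B : Matrix n ι R) : Matrix (m × n) ι R :=
  fun p l => A p.1 l * B p.2 l

variable [Fintype ι] [DecidableEq ι]

theorem khatriRao_mul_diagonal (A : Matrix m ι R) (B : Matrix n ι R) (d e : ι → R) :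
    khatriRao (A * diagonal d) (B * diagonal e) = khatriRao A B * diagonal (d * e) := by
  ext p l
  simp only [khatriRao, mul_diagonal, Pi.mul_apply]
  ring

theorem mul_diagonal_mulSingle (A : Matrix m ι R) (k : ι) (c : R) :
    A * diagonal (Pi.mulSingle k c) = fun i l => if l = k then c * A i l else A i l := by
  ext i l
  rw [mul_diagonal, Pi.mulSingle_apply]
  split_ifs <;> ring

theorem mul_diagonal_mulVec_mul_diagonal_transpose [Fintype n] (W : Matrix m ι R)
    (β : Matrix n ι R) (z : n → R) {d e : ι → R} (hde : d * e = 1) :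
    (W * diagonal d) *ᵥ ((β * diagonal e)ᵀ *ᵥ z) = W *ᵥ (βᵀ *ᵥ z) := by
  rw [transpose_mul, diagonal_transpose, mulVec_mulVec, mulVec_mulVec, Matrix.mul_assoc,
    ← Matrix.mul_assoc (diagonal d), diagonal_mul_diagonal, ← Pi.mul_def, hde, diagonal_one',
    Matrix.one_mul]

theorem mul_diagonal_mul_diagonal_mul_transpose (W : Matrix m ι R) (d e : ι → R) :
    W * diagonal d * diagonal e * (W * diagonal d)ᵀ = W * diagonal (d * e * d) * Wᵀ := by
  rw [transpose_mul, diagonal_transpose, Matrix.mul_assoc W, diagonal_mul_diagonal, ← Pi.mul_def,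
    ← Matrix.mul_assoc, Matrix.mul_assoc W, diagonal_mul_diagonal, ← Pi.mul_def]

end Matrix

theorem spaco_rescaling_invariance_general
    {T J q K : ℕ}
    (Φ : Matrix (Fin T) (Fin K) ℝ) (V : Matrix (Fin J) (Fin K) ℝ)
    (β : Matrix (Fin q) (Fin K) ℝ) (z : Fin q → ℝ)
    (s : Fin K → ℝ)
    (k : Fin K) (c₁ c₂ c₃ : ℝ) (hc : c₁ * c₂ * c₃ = 1) :
    let W : Matrix (Fin J × Fin T) (Fin K) ℝ := fun p l => V p.1 l * Φ p.2 l
    let Φ' : Matrix (Fin T) (Fin K) ℝ := fun t l => if l = k then c₁ * Φ t l else Φ t l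
    let V' : Matrix (Fin J) (Fin K) ℝ := fun j l => if l = k then c₂ * V j l else V j l
    let β' : Matrix (Fin q) (Fin K) ℝ := fun i l => if l = k then c₃ * β i l else β i l
    let s2' : Fin K → ℝ := fun l => if l = k then c₃ ^ 2 * s l ^ 2 else s l ^ 2
    let W' : Matrix (Fin J × Fin T) (Fin K) ℝ := fun p l => V' p.1 l * Φ' p.2 l
    W'.mulVec ((β')ᵀ.mulVec z) = W.mulVec (βᵀ.mulVec z) ∧
      W' * Matrix.diagonal s2' * W'ᵀ = W * Matrix.diagonal (fun l => s l ^ 2) * Wᵀ := by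
  intro W Φ' V' β' s2' W'
  have hW : W = khatriRao V Φ := rfl
  have hW' : W' = W * diagonal (Pi.mulSingle k (c₂ * c₁)) := by
    rw [hW, Pi.mulSingle_mul, ← khatriRao_mul_diagonal, mul_diagonal_mulSingle,
      mul_diagonal_mulSingle]
    rfl
  have hβ' : β' = β * diagonal (Pi.mulSingle k c₃) := (mul_diagonal_mulSingle β k c₃).symm
  constructor
  · have hcancel : Pi.mulSingle k (c₂ * c₁) * Pi.mulSingle k c₃ = (1 : Fin K → ℝ) := by
      rw [← Pi.mulSingle_mul, mul_comm c₂, hc, Pi.mulSingle_one]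
    rw [hW', hβ', mul_diagonal_mulVec_mul_diagonal_transpose W β z hcancel]
  · have hscale :
        Pi.mulSingle k (c₂ * c₁) * s2' * Pi.mulSingle k (c₂ * c₁) = fun l => s l ^ 2 := by
      ext l
      simp only [Pi.mul_apply, Pi.mulSingle_apply, s2']
      split_ifs
      · linear_combination (c₁ * c₂ * c₃ + 1) * s l ^ 2 * hc
      · ring
    rw [hW', mul_diagonal_mul_diagonal_mul_transpose, hscale]

/-- Non-identifiability of SPACO parameters: rescaling the k-th columns of Φ, V, β by
c₁, c₂, c₃ with c₁c₂c₃ = 1 and replacing s_k² by c₃²s_k² leaves the marginal mean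
m = (V⊙Φ)βᵀz and the signal covariance C = (V⊙Φ)diag(s²)(V⊙Φ)ᵀ unchanged. -/
theorem spaco_rescaling_invariance
    {T J q K : ℕ}
    (Φ : Matrix (Fin T) (Fin K) ℝ) (V : Matrix (Fin J) (Fin K) ℝ)
    (β : Matrix (Fin q) (Fin K) ℝ) (z : Fin q → ℝ)
    (s : Fin K → ℝ) (hs : ∀ l, 0 < s l)
    (k : Fin K) (c₁ c₂ c₃ : ℝ) (hc : c₁ * c₂ * c₃ = 1) :
    let W : Matrix (Fin J × Fin T) (Fin K) ℝ := fun p l => V p.1 l * Φ p.2 l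
    let Φ' : Matrix (Fin T) (Fin K) ℝ := fun t l => if l = k then c₁ * Φ t l else Φ t l
    let V' : Matrix (Fin J) (Fin K) ℝ := fun j l => if l = k then c₂ * V j l else V j l
    let β' : Matrix (Fin q) (Fin K) ℝ := fun i l => if l = k then c₃ * β i l else β i l
    let s2' : Fin K → ℝ := fun l => if l = k then c₃ ^ 2 * s l ^ 2 else s l ^ 2
    let W' : Matrix (Fin J × Fin T) (Fin K) ℝ := fun p l => V' p.1 l * Φ' p.2 l
    W'.mulVec ((β')ᵀ.mulVec z) = W.mulVec (βᵀ.mulVec z) ∧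
      W' * Matrix.diagonal s2' * W'ᵀ = W * Matrix.diagonal (fun l => s l ^ 2) * Wᵀ :=
  spaco_rescaling_invariance_general Φ V β z s k c₁ c₂ c₃ hc
end

section
/- Let s_1,…,s_K > 0 and Λ_f = diag(1/s_1²,…,1/s_K²) ∈ ℝ^{K×K}, let Λ ∈ ℝ^{n×n} be symmetric, M ∈ ℝ^{n×K}, and assume Λ_f + MᵀΛM is invertible with Σ = (Λ_f + MᵀΛM)⁻¹. Let x ∈ ℝⁿ and z ∈ ℝ^q. Fix k ∈ {1,…,K} and assume w := s_k² − Σ_{kk} > 0. For β ∈ ℝ^{q×K} with columns β_1,…,β_K, define μ(β) = Σ(Λ_f βᵀz + MᵀΛx), z̃ = (√w / s_k²)·z ∈ ℝ^q, and ỹ = (1/√w)·(e_kᵀΣMᵀΛx + Σ_{ℓ≠k} (Σ_{kℓ}/s_ℓ²)·zᵀβ_ℓ), where e_k is the k-th standard basis vector of ℝᴷ. Then, with the columns β_ℓ for ℓ ≠ k held fixed, the function β_k ↦ zᵀβΛ_fβᵀz − μ(β)ᵀΣ⁻¹μ(β) − (z̃ᵀβ_k − ỹ)² is constant in β_k ∈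 ℝ^q. -/
/-!
Put `p = βᵀ z` and `c = Mᵀ Λ x`, so that `μ = Σ v` with `v = Λ_f p + c`. Then
`zᵀ β Λ_f βᵀ z = pᵀ Λ_f p`, `μᵀ Σ⁻¹ μ = vᵀ Σ v`, and the constructed residual is
`z̃ᵀ β_k - ỹ = (p_k - (Σ v)_k) / √w`, so the whole expression depends on `β` only through `p`.
Changing `β_k` moves `p` along `e_k`, say by `t`, and `v` along `e_k` by `t / s_k²`: the three
quadratic forms then change by multiples of `t` and `t²` that cancel exactly because
`w + Σ_kk = s_k²`.
-/

open Matrix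

namespace Matrix

variable {ι m 𝕜 : Type*} [Fintype ι] [CommRing 𝕜]

theorem dotProduct_mul_mul_transpose_mulVec [Fintype m] (B : Matrix m ι 𝕜) (D : Matrix ι ι 𝕜)
    (z : m → 𝕜) : z ⬝ᵥ (B * D * Bᵀ) *ᵥ z = (Bᵀ *ᵥ z) ⬝ᵥ D *ᵥ (Bᵀ *ᵥ z) := by
  rw [← mulVec_mulVec, ← mulVec_mulVec, dotProduct_mulVec, ← mulVec_transpose]

variable [DecidableEq ι]

theorem mulVec_dotProduct_inv_mulVec_mulVec {S : Matrix ι ι 𝕜} (hS : IsUnit S) (v : ι → 𝕜) :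
    (S *ᵥ v) ⬝ᵥ S⁻¹ *ᵥ (S *ᵥ v) = v ⬝ᵥ S *ᵥ v := by
  rw [mulVec_mulVec, nonsing_inv_mul S ((isUnit_iff_isUnit_det S).mp hS), one_mulVec,
    dotProduct_comm]

theorem add_single_dotProduct_mulVec_add_single {S : Matrix ι ι 𝕜} (hS : S.IsSymm)
    (v : ι → 𝕜) (k : ι) (t : 𝕜) :
    (v + Pi.single k t) ⬝ᵥ S *ᵥ (v + Pi.single k t)
      = v ⬝ᵥ S *ᵥ v + 2 * t * (S *ᵥ v) k + S k k * t ^ 2 := by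
  have hcol : v ⬝ᵥ S *ᵥ Pi.single k t = t * (S *ᵥ v) k := by
    rw [dotProduct_mulVec, dotProduct_single, mul_comm, ← mulVec_transpose, hS.eq]
  have hkk : (S *ᵥ Pi.single k t) k = S k k * t := by simp
  simp only [mulVec_add, dotProduct_add, add_dotProduct, single_dotProduct, hcol, hkk]
  ring

end Matrix

section BetaUpdate

variable {ι 𝕜 : Type*} [Fintype ι] [DecidableEq ι] [Field 𝕜]

/-- The expression of the theorem as a function of `p = βᵀ z`, with `σ2 l = s_l²`, `S = Σ`
and `c = Mᵀ Λ x`. -/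
def betaUpdateGap (σ2 : ι → 𝕜) (S : Matrix ι ι 𝕜) (c : ι → 𝕜) (k : ι) (w : 𝕜) (p : ι → 𝕜) :
    𝕜 :=
  p ⬝ᵥ diagonal (fun l => (σ2 l)⁻¹) *ᵥ p
    - (diagonal (fun l => (σ2 l)⁻¹) *ᵥ p + c) ⬝ᵥ S *ᵥ (diagonal (fun l => (σ2 l)⁻¹) *ᵥ p + c)
    - (p k - (S *ᵥ (diagonal (fun l => (σ2 l)⁻¹) *ᵥ p + c)) k) ^ 2 / w

variable {σ2 : ι → 𝕜} {S : Matrix ι ι 𝕜} {k : ι} {w : 𝕜}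

theorem betaUpdateGap_add_single (hS : S.IsSymm) (hσ : σ2 k ≠ 0) (hw : w ≠ 0)
    (hkw : w = σ2 k - S k k) (c p : ι → 𝕜) (t : 𝕜) :
    betaUpdateGap σ2 S c k w (p + Pi.single k t) = betaUpdateGap σ2 S c k w p := by
  have hSk : ∀ v : ι → 𝕜, (S *ᵥ (v + Pi.single k ((σ2 k)⁻¹ * t))) k
      = (S *ᵥ v) k + S k k * ((σ2 k)⁻¹ * t) := fun v => by simp [mulVec_add]
  unfold betaUpdateGap
  rw [add_single_dotProduct_mulVec_add_single (isSymm_diagonal _), mulVec_add,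
    diagonal_mulVec_single, add_right_comm (diagonal _ *ᵥ p),
    add_single_dotProduct_mulVec_add_single hS, hSk]
  simp only [mulVec_diagonal, diagonal_apply_eq, Pi.add_apply, Pi.single_eq_same]
  subst hkw
  field_simp
  ring

theorem betaUpdateGap_eq_of_forall_ne (hS : S.IsSymm) (hσ : σ2 k ≠ 0) (hw : w ≠ 0)
    (hkw : w = σ2 k - S k k) (c : ι → 𝕜) {p p' : ι → 𝕜} (hpp' : ∀ l, l ≠ k → p l = p' l) :
    betaUpdateGap σ2 S c k w p = betaUpdateGap σ2 S c k w p' := by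
  have hp' : p' = p + Pi.single k (p' k - p k) := by
    funext l
    by_cases hl : l = k
    · subst hl; simp
    · simp [hl, hpp' l hl]
  rw [hp', betaUpdateGap_add_single hS hσ hw hkw]

theorem leastSquaresResidual_eq {m : Type*} [Fintype m] (hσ : σ2 k ≠ 0) {r : 𝕜} (hr : r ≠ 0)
    (hkr : r ^ 2 = σ2 k - S k k) (c : ι → 𝕜) (z : m → 𝕜) (β : Matrix m ι 𝕜) :
    (fun i => r / σ2 k * z i) ⬝ᵥ (fun i => β i k)
        - 1 / r * ((fun l => S k l) ⬝ᵥ c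
          + ∑ l ∈ Finset.univ.erase k, S k l / σ2 l * (z ⬝ᵥ fun i => β i l))
      = ((βᵀ *ᵥ z) k - (S *ᵥ (diagonal (fun l => (σ2 l)⁻¹) *ᵥ (βᵀ *ᵥ z) + c)) k) / r := by
  set p := βᵀ *ᵥ z
  have hcol : ∀ l, z ⬝ᵥ (fun i => β i l) = p l := fun l => dotProduct_comm _ _
  have hzt : (fun i => r / σ2 k * z i) ⬝ᵥ (fun i => β i k) = r / σ2 k * p k := by
    rw [← hcol]; exact smul_dotProduct (r / σ2 k) z _
  have hSk : (S *ᵥ (diagonal (fun l => (σ2 l)⁻¹) *ᵥ p + c)) k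
      = S k k * (p k / σ2 k) + ∑ l ∈ Finset.univ.erase k, S k l / σ2 l * p l
        + (fun l => S k l) ⬝ᵥ c := by
    have hdiag :
        (S *ᵥ (diagonal (fun l => (σ2 l)⁻¹) *ᵥ p)) k = ∑ l, S k l * ((σ2 l)⁻¹ * p l) := by
      simp only [mulVec, dotProduct, diagonal_apply, ite_mul, zero_mul, Finset.sum_ite_eq,
        Finset.mem_univ, if_true]
    rw [mulVec_add, Pi.add_apply, hdiag, ← Finset.add_sum_erase _ _ (Finset.mem_univ k)]
    congr 2
    · ring
    · exact Finset.sum_congr rfl fun l _ => by ring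
  rw [hzt, hSk]
  simp only [hcol]
  field_simp
  linear_combination p k * hkr

end BetaUpdate

/-- The β_k-update of SPACO (Lemma 1 / Proposition 2): with the other columns of β fixed,
the β_k-dependent part of the negative marginal log-likelihood,
zᵀβΛ_fβᵀz − μ(β)ᵀΣ⁻¹μ(β), differs from (z̃ᵀβ_k − ỹ)² by a quantity constant in β_k. -/
theorem spaco_beta_update_least_squares
    {n K q : ℕ} (s : Fin K → ℝ) (hs : ∀ l, 0 < s l)
    (Λ : Matrix (Fin n) (Fin n) ℝ) (hΛ : Λ.IsSymm)
    (M : Matrix (Fin n) (Fin K) ℝ)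
    (hinv : IsUnit ((Matrix.diagonal fun l => (s l ^ 2)⁻¹) + Mᵀ * Λ * M))
    (x : Fin n → ℝ) (z : Fin q → ℝ) (k : Fin K)
    (hw : 0 < s k ^ 2 - ((Matrix.diagonal fun l => (s l ^ 2)⁻¹) + Mᵀ * Λ * M)⁻¹ k k) :
    let Λf : Matrix (Fin K) (Fin K) ℝ := Matrix.diagonal fun l => (s l ^ 2)⁻¹
    let S := (Λf + Mᵀ * Λ * M)⁻¹
    let w := s k ^ 2 - S k k
    let zt : Fin q → ℝ := fun i => (Real.sqrt w / s k ^ 2) * z i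
    let yt : Matrix (Fin q) (Fin K) ℝ → ℝ := fun β =>
      (1 / Real.sqrt w) * ((fun l => S k l) ⬝ᵥ Mᵀ.mulVec (Λ.mulVec x)
        + ∑ l ∈ Finset.univ.erase k, (S k l / s l ^ 2) * (z ⬝ᵥ fun i => β i l))
    let μ : Matrix (Fin q) (Fin K) ℝ → (Fin K → ℝ) := fun β =>
      S.mulVec (Λf.mulVec (βᵀ.mulVec z) + Mᵀ.mulVec (Λ.mulVec x))
    let F : Matrix (Fin q) (Fin K) ℝ → ℝ := fun β =>
      (z ⬝ᵥ (β * Λf * βᵀ).mulVec z - μ β ⬝ᵥ (S⁻¹).mulVec (μ β)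
        - (zt ⬝ᵥ (fun i => β i k) - yt β) ^ 2)
    ∀ β β' : Matrix (Fin q) (Fin K) ℝ,
      (∀ l, l ≠ k → ∀ i, β i l = β' i l) → F β = F β' := by
  intro Λf S w zt yt μ F β β' hcols
  have hS : S.IsSymm := by
    refine ((isSymm_diagonal _).add ?_).inv
    simp [IsSymm, transpose_mul, hΛ.eq, Matrix.mul_assoc]
  have hσ : s k ^ 2 ≠ 0 := (pow_pos (hs k) 2).ne'
  have hF : ∀ γ, F γ = betaUpdateGap (fun l => s l ^ 2) S (Mᵀ *ᵥ (Λ *ᵥ x)) k w (γᵀ *ᵥ z) :=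
    fun γ => by
      show _ - _ - (_ - _) ^ 2 = _
      rw [dotProduct_mul_mul_transpose_mulVec,
        mulVec_dotProduct_inv_mulVec_mulVec (isUnit_nonsing_inv_iff.mpr hinv),
        leastSquaresResidual_eq (σ2 := fun l => s l ^ 2) (S := S) hσ (Real.sqrt_pos.mpr hw).ne'
          (Real.sq_sqrt hw.le), div_pow, Real.sq_sqrt hw.le]
      rfl
  rw [hF, hF]
  exact betaUpdateGap_eq_of_forall_ne hS hσ hw.ne' rfl _ fun l hl =>
    congrArg (· ⬝ᵥ z) (funext (hcols l hl))
end

section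
/- Let s_1,…,s_K > 0 and Λ_f = diag(1/s_1²,…,1/s_K²) ∈ ℝ^{K×K}, let Λ ∈ ℝ^{n×n} be symmetric, M ∈ ℝ^{n×K}, δ ∈ ℝ, and assume δΛ_f + MᵀΛM is invertible with Σ(δ) = (δΛ_f + MᵀΛM)⁻¹. Fix k ∈ {1,…,K} and let e_k be the k-th standard basis vector of ℝᴷ. Let z ∈ ℝ^q, β*, β ∈ ℝ^{q×K} with columns β*_ℓ, β_ℓ, ζ ∈ ℝᴷ, ε ∈ ℝⁿ, and set x = M((β*)ᵀz + ζ) + ε. Define ỹ(δ) = e_kᵀΣ(δ)MᵀΛx + δ·Σ_{ℓ≠k} (Σ(δ)_{kℓ}/s_ℓ²)·zᵀβ_ℓ and z̃(δ) = (1 − δ·Σ(δ)_{kk}/s_k²)·z. Then ỹ(δ) = z̃(δ)ᵀβ*_k + δ·Σ_{ℓ≠k} (Σ(δ)_{kℓ}/s_ℓ²)·zᵀ(β_ℓ − β*_ℓ) + ξ, where ξ = e_kᵀ(Id_K − δΣ(δ)Λ_f)ζ + e_kᵀΣ(δ)MᵀΛε. -/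
/-!
Since `Σ(δ) (δΛ_f + MᵀΛM) = 1`, we have `Σ(δ) MᵀΛM = 1 - δ Σ(δ) Λ_f`, so applying
`Σ(δ) MᵀΛ` to `x = M((β*)ᵀz + ζ) + ε` gives `(1 - δ Σ(δ) Λ_f)((β*)ᵀz + ζ) + Σ(δ) MᵀΛε`.
Reading off the `k`-th coordinate, the diagonal term `l = k` of `δ Σ(δ) Λ_f (β*)ᵀz` shrinks the
signal to `z̃(δ)ᵀβ*_k`, and the terms `l ≠ k` combine with the plug-in sum into the bias.
-/

open Matrix

namespace Matrix

variable {ι m R : Type*} [Fintype m] [CommRing R]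

theorem transpose_mulVec_apply (A : Matrix m ι R) (z : m → R) (l : ι) :
    (Aᵀ *ᵥ z) l = z ⬝ᵥ fun i => A i l := by
  rw [mulVec_transpose]
  rfl

variable [Fintype ι] [DecidableEq ι]

theorem nonsing_inv_smul_add_mul_eq_one_sub {D B : Matrix ι ι R} {δ : R}
    (h : IsUnit (δ • D + B)) :
    (δ • D + B)⁻¹ * B = 1 - δ • ((δ • D + B)⁻¹ * D) := by
  have hinv_mul := nonsing_inv_mul _ ((isUnit_iff_isUnit_det _).mp h)
  rw [mul_add, Matrix.mul_smul] at hinv_mul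
  rw [← hinv_mul, add_sub_cancel_left]

theorem nonsing_inv_smul_add_gram_mulVec_mulVec_add {D : Matrix ι ι R} {Λ : Matrix m m R}
    {M : Matrix m ι R} {δ : R} (h : IsUnit (δ • D + Mᵀ * Λ * M)) (u : ι → R) (ε : m → R) :
    (δ • D + Mᵀ * Λ * M)⁻¹ *ᵥ (Mᵀ *ᵥ (Λ *ᵥ (M *ᵥ u + ε)))
      = (1 - δ • ((δ • D + Mᵀ * Λ * M)⁻¹ * D)) *ᵥ u
        + (δ • D + Mᵀ * Λ * M)⁻¹ *ᵥ (Mᵀ *ᵥ (Λ *ᵥ ε)) := by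
  rw [mulVec_add Λ, mulVec_add Mᵀ, mulVec_add, mulVec_mulVec, mulVec_mulVec, mulVec_mulVec,
    Matrix.mul_assoc (_ * Mᵀ), Matrix.mul_assoc _ Mᵀ, ← Matrix.mul_assoc Mᵀ,
    nonsing_inv_smul_add_mul_eq_one_sub h]

theorem one_sub_smul_mul_diagonal_mulVec_apply (S : Matrix ι ι R) (d v : ι → R) (δ : R)
    (k : ι) :
    ((1 - δ • (S * diagonal d)) *ᵥ v) k = v k - δ * ∑ l, S k l * d l * v l := by
  rw [sub_mulVec, one_mulVec, smul_mulVec, ← mulVec_mulVec, Pi.sub_apply, Pi.smul_apply,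
    smul_eq_mul]
  simp [mulVec, dotProduct, diagonal_apply, mul_assoc]

end Matrix

theorem Finset.sub_mul_sum_eq_mul_sub_mul_sum_erase {ι R : Type*} [Fintype ι] [DecidableEq ι]
    [CommRing R] (c v : ι → R) (δ : R) (k : ι) :
    v k - δ * ∑ l, c l * v l
      = (1 - δ * c k) * v k - δ * ∑ l ∈ Finset.univ.erase k, c l * v l := by
  rw [← Finset.add_sum_erase _ _ (Finset.mem_univ k)]
  ring

theorem spaco_testing_response_decomposition_general
    {n K q : ℕ} (s : Fin K → ℝ)
    (Λ : Matrix (Fin n) (Fin n) ℝ)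
    (M : Matrix (Fin n) (Fin K) ℝ) (δ : ℝ)
    (hinv : IsUnit (δ • (Matrix.diagonal fun l => (s l ^ 2)⁻¹) + Mᵀ * Λ * M))
    (k : Fin K) (z : Fin q → ℝ)
    (βs β : Matrix (Fin q) (Fin K) ℝ) (ζ : Fin K → ℝ) (ε : Fin n → ℝ) :
    let Λf : Matrix (Fin K) (Fin K) ℝ := Matrix.diagonal fun l => (s l ^ 2)⁻¹
    let S := (δ • Λf + Mᵀ * Λ * M)⁻¹
    let e : Fin K → ℝ := Pi.single k 1
    let x := M.mulVec (βsᵀ.mulVec z + ζ) + ε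
    let yt := e ⬝ᵥ S.mulVec (Mᵀ.mulVec (Λ.mulVec x))
        + δ * ∑ l ∈ Finset.univ.erase k, (S k l / s l ^ 2) * (z ⬝ᵥ fun i => β i l)
    let zt : Fin q → ℝ := fun i => (1 - δ * S k k / s k ^ 2) * z i
    let ξ := e ⬝ᵥ ((1 : Matrix (Fin K) (Fin K) ℝ) - δ • (S * Λf)).mulVec ζ
        + e ⬝ᵥ S.mulVec (Mᵀ.mulVec (Λ.mulVec ε))
    yt = zt ⬝ᵥ (fun i => βs i k)
        + δ * (∑ l ∈ Finset.univ.erase k,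
            (S k l / s l ^ 2) * (z ⬝ᵥ fun i => β i l - βs i l))
        + ξ := by
  intro Λf S e x yt zt ξ
  set w := βsᵀ *ᵥ z with hw
  have hx : S *ᵥ (Mᵀ *ᵥ (Λ *ᵥ x)) = (1 - δ • (S * Λf)) *ᵥ (w + ζ) + S *ᵥ (Mᵀ *ᵥ (Λ *ᵥ ε)) :=
    nonsing_inv_smul_add_gram_mulVec_mulVec_add hinv _ _
  have hsignal : ((1 - δ • (S * Λf)) *ᵥ w) k
      = zt ⬝ᵥ (fun i => βs i k) - δ * ∑ l ∈ Finset.univ.erase k, S k l / s l ^ 2 * w l := by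
    have hzt : zt ⬝ᵥ (fun i => βs i k) = (1 - δ * (S k k / s k ^ 2)) * w k := by
      rw [hw, transpose_mulVec_apply, ← mul_div_assoc]
      exact smul_dotProduct (1 - δ * S k k / s k ^ 2) z _
    simp only [Λf, one_sub_smul_mul_diagonal_mulVec_apply, ← div_eq_mul_inv]
    rw [Finset.sub_mul_sum_eq_mul_sub_mul_sum_erase, hzt]
  have hbias : ∑ l ∈ Finset.univ.erase k, S k l / s l ^ 2 * (z ⬝ᵥ fun i => β i l - βs i l)
      = ∑ l ∈ Finset.univ.erase k, S k l / s l ^ 2 * (z ⬝ᵥ fun i => β i l)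
        - ∑ l ∈ Finset.univ.erase k, S k l / s l ^ 2 * w l := by
    rw [← Finset.sum_sub_distrib]
    refine Finset.sum_congr rfl fun l _ => ?_
    rw [hw, transpose_mulVec_apply, ← mul_sub, ← dotProduct_sub]
    rfl
  simp only [yt, ξ, e, hx, single_one_dotProduct, mulVec_add, Pi.add_apply, hsignal, hbias]
  ring

/-- Deterministic decomposition behind Lemma 3: with x = M((β*)ᵀz + ζ) + ε and
Σ(δ) = (δΛ_f + MᵀΛM)⁻¹, the constructed response ỹ(δ) decomposes as
z̃(δ)ᵀβ*_k + δ·Σ_{ℓ≠k}(Σ(δ)_{kℓ}/s_ℓ²)·zᵀ(β_ℓ − β*_ℓ) + ξ, where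
ξ = e_kᵀ(Id − δΣ(δ)Λ_f)ζ + e_kᵀΣ(δ)MᵀΛε. -/
theorem spaco_testing_response_decomposition
    {n K q : ℕ} (s : Fin K → ℝ) (hs : ∀ l, 0 < s l)
    (Λ : Matrix (Fin n) (Fin n) ℝ) (hΛ : Λ.IsSymm)
    (M : Matrix (Fin n) (Fin K) ℝ) (δ : ℝ)
    (hinv : IsUnit (δ • (Matrix.diagonal fun l => (s l ^ 2)⁻¹) + Mᵀ * Λ * M))
    (k : Fin K) (z : Fin q → ℝ)
    (βs β : Matrix (Fin q) (Fin K) ℝ) (ζ : Fin K → ℝ) (ε : Fin n → ℝ) :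
    let Λf : Matrix (Fin K) (Fin K) ℝ := Matrix.diagonal fun l => (s l ^ 2)⁻¹
    let S := (δ • Λf + Mᵀ * Λ * M)⁻¹
    let e : Fin K → ℝ := Pi.single k 1
    let x := M.mulVec (βsᵀ.mulVec z + ζ) + ε
    let yt := e ⬝ᵥ S.mulVec (Mᵀ.mulVec (Λ.mulVec x))
        + δ * ∑ l ∈ Finset.univ.erase k, (S k l / s l ^ 2) * (z ⬝ᵥ fun i => β i l)
    let zt : Fin q → ℝ := fun i => (1 - δ * S k k / s k ^ 2) * z i
    let ξ := e ⬝ᵥ ((1 : Matrix (Fin K) (Fin K) ℝ) - δ • (S * Λf)).mulVec ζ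
        + e ⬝ᵥ S.mulVec (Mᵀ.mulVec (Λ.mulVec ε))
    yt = zt ⬝ᵥ (fun i => βs i k)
        + δ * (∑ l ∈ Finset.univ.erase k,
            (S k l / s l ^ 2) * (z ⬝ᵥ fun i => β i l - βs i l))
        + ξ :=
  spaco_testing_response_decomposition_general s Λ M δ hinv k z βs β ζ ε
end

section
/- Let n be a positive integer, A ∈ ℝ^{n×n} a symmetric matrix, a, x₀ ∈ ℝⁿ, h₀ > 0, and γ > 0 such that ⟨y, Ay⟩ ≤ γ‖y‖₂² for all y ∈ ℝⁿ. Define f(x) = (1/2)⟨x, Ax⟩ − ⟨a, x⟩. Let 0 < ρ ≤ 1/γ, set x̃ = x₀ − ρ(Ax₀ − a), assume x̃ ≠ 0 and ‖x₀‖₂² = h₀, and let x* = √h₀ · x̃ / ‖x̃‖₂. Then f(x*) ≤ f(x₀). -/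
open Matrix
open WithLp (toLp ofLp)
open scoped RealInnerProductSpace

/-! Since `ρ ⟪y, A y⟫ ≤ ‖y‖²`, the objective is majorised by the proximal surrogate
`f z ≤ f x₀ + (‖z - x̃‖² - ‖x₀ - x̃‖²) / (2ρ)` with `x̃ = x₀ - ρ ∇f(x₀)`, which is tight at `z = x₀`.
Rescaling `x̃` to the sphere of radius `‖x₀‖` gives the point of that sphere nearest to `x̃`
(reverse triangle inequality), so it is at least as close to `x̃` as `x₀` is, and the surrogate
bound at it is at most `f x₀`. -/

theorem norm_div_norm_smul_sub_le {E : Type*} [NormedAddCommGroup E] [NormedSpace ℝ E] (y z : E) :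
    ‖(‖z‖ / ‖y‖) • y - y‖ ≤ ‖z - y‖ := by
  rcases eq_or_ne y 0 with rfl | hy
  · simp
  calc ‖(‖z‖ / ‖y‖) • y - y‖ = ‖(‖z‖ / ‖y‖ - 1) • y‖ := by rw [sub_smul, one_smul]
    _ = |(‖z‖ / ‖y‖ - 1) * ‖y‖| := by rw [norm_smul, Real.norm_eq_abs, abs_mul, abs_norm]
    _ = |‖z‖ - ‖y‖| := by field_simp
    _ ≤ ‖z - y‖ := abs_norm_sub_norm_le z y

section QuadraticObjective

variable {E : Type*} [NormedAddCommGroup E] [InnerProductSpace ℝ E]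

noncomputable def quadObjective (T : E →ₗ[ℝ] E) (a x : E) : ℝ := 1 / 2 * ⟪x, T x⟫ - ⟪a, x⟫

variable {T : E →ₗ[ℝ] E}

theorem quadObjective_add (hT : T.IsSymmetric) (a x d : E) :
    quadObjective T a (x + d) = quadObjective T a x + ⟪T x - a, d⟫ + 1 / 2 * ⟪d, T d⟫ := by
  have hdx : ⟪d, T x⟫ = ⟪x, T d⟫ := by rw [← hT d x, real_inner_comm]
  simp only [quadObjective, map_add, inner_add_left, inner_add_right, inner_sub_left, hT x d, hdx]
  ring

theorem quadObjective_le_add_norm_sub_sq (hT : T.IsSymmetric) {ρ : ℝ} (hρ : 0 < ρ)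
    (hTρ : ∀ y, ρ * ⟪y, T y⟫ ≤ ‖y‖ ^ 2) (a x z : E) :
    quadObjective T a z ≤ quadObjective T a x +
      (‖z - (x - ρ • (T x - a))‖ ^ 2 - ‖ρ • (T x - a)‖ ^ 2) / (2 * ρ) := by
  obtain ⟨d, rfl⟩ : ∃ d, z = x + d := ⟨z - x, (add_sub_cancel x z).symm⟩
  set g := T x - a
  have hsq : ‖x + d - (x - ρ • g)‖ ^ 2 - ‖ρ • g‖ ^ 2 = ‖d‖ ^ 2 + 2 * ρ * ⟪g, d⟫ := by
    rw [show x + d - (x - ρ • g) = d + ρ • g by abel, norm_add_sq_real, real_inner_smul_right,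
      real_inner_comm]
    ring
  have hcurv : 1 / 2 * ⟪d, T d⟫ ≤ ‖d‖ ^ 2 / (2 * ρ) := by
    rw [le_div_iff₀ (by positivity)]
    linarith [hTρ d]
  rw [hsq, quadObjective_add hT, add_div, mul_div_cancel_left₀ _ (by positivity)]
  linarith

theorem quadObjective_normalize_gradient_step_le (hT : T.IsSymmetric) {ρ : ℝ} (hρ : 0 < ρ)
    (hTρ : ∀ y, ρ * ⟪y, T y⟫ ≤ ‖y‖ ^ 2) (a x : E) :
    quadObjective T a ((‖x‖ / ‖x - ρ • (T x - a)‖) • (x - ρ • (T x - a))) ≤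
      quadObjective T a x := by
  set xt := x - ρ • (T x - a)
  have hproj : ‖(‖x‖ / ‖xt‖) • xt - xt‖ ≤ ‖ρ • (T x - a)‖ := by
    simpa [xt] using norm_div_norm_smul_sub_le xt x
  have hdescent := quadObjective_le_add_norm_sub_sq hT hρ hTρ a x ((‖x‖ / ‖xt‖) • xt)
  have hnum : ‖(‖x‖ / ‖xt‖) • xt - xt‖ ^ 2 - ‖ρ • (T x - a)‖ ^ 2 ≤ 0 :=
    sub_nonpos.mpr (pow_le_pow_left₀ (norm_nonneg _) hproj 2)
  linarith [div_nonpos_of_nonpos_of_nonneg hnum (by positivity : (0 : ℝ) ≤ 2 * ρ)]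

end QuadraticObjective

theorem proximal_descent_general
    {n : ℕ} (A : Matrix (Fin n) (Fin n) ℝ) (hA : A.IsSymm)
    (a x₀ : Fin n → ℝ) (h₀ γ : ℝ) (hγ : 0 < γ)
    (hbound : ∀ y : Fin n → ℝ, y ⬝ᵥ A.mulVec y ≤ γ * ∑ i, y i ^ 2)
    (ρ : ℝ) (hρ : 0 < ρ) (hργ : ρ ≤ 1 / γ) :
    let f : (Fin n → ℝ) → ℝ := fun x => (1 / 2) * (x ⬝ᵥ A.mulVec x) - a ⬝ᵥ x
    let xt := x₀ - ρ • (A.mulVec x₀ - a)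
    xt ≠ 0 → (∑ i, x₀ i ^ 2) = h₀ →
      f ((Real.sqrt h₀ / Real.sqrt (∑ i, xt i ^ 2)) • xt) ≤ f x₀ := by
  intro f xt _ hnorm
  set T := A.toEuclideanLin
  have hT : T.IsSymmetric := isSymmetric_toEuclideanLin_iff.mpr (isHermitian_iff_isSymm.mpr hA)
  have hf : ∀ x, f x = quadObjective T (toLp 2 a) (toLp 2 x) := fun x => by
    simp [f, quadObjective, T, EuclideanSpace.inner_toLp_toLp, dotProduct_comm]
  have hnorm_eq : ∀ x : Fin n → ℝ, √(∑ i, x i ^ 2) = ‖toLp 2 x‖ := fun x => by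
    simp [EuclideanSpace.norm_eq]
  have hTγ : ∀ y, ⟪y, T y⟫ ≤ γ * ‖y‖ ^ 2 := fun y => by
    simpa [T, EuclideanSpace.inner_eq_star_dotProduct, toLpLin_apply, dotProduct_comm,
      EuclideanSpace.real_norm_sq_eq] using hbound (ofLp y)
  have hTρ : ∀ y, ρ * ⟪y, T y⟫ ≤ ‖y‖ ^ 2 := fun y =>
    calc ρ * ⟪y, T y⟫ ≤ (ρ * γ) * ‖y‖ ^ 2 := by rw [mul_assoc]; gcongr; exact hTγ y
      _ ≤ ‖y‖ ^ 2 := mul_le_of_le_one_left (sq_nonneg _) ((le_div_iff₀ hγ).mp hργ)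
  have hxt : toLp 2 xt = toLp 2 x₀ - ρ • (T (toLp 2 x₀) - toLp 2 a) := by simp [xt, T]
  rw [← hnorm, hnorm_eq, hnorm_eq, hf, hf, WithLp.toLp_smul, hxt]
  exact quadObjective_normalize_gradient_step_le hT hρ hTρ (toLp 2 a) (toLp 2 x₀)

/-- Lemma 6 (descent claim): with ⟨y, Ay⟩ ≤ γ‖y‖₂² for all y, 0 < ρ ≤ 1/γ, ‖x₀‖₂² = h₀
and x̃ = x₀ − ρ(Ax₀ − a) ≠ 0, the norm-constrained proximal gradient update
x* = √h₀·x̃/‖x̃‖₂ satisfies f(x*) ≤ f(x₀) for f(x) = (1/2)⟨x, Ax⟩ − ⟨a, x⟩. -/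
theorem proximal_descent
    {n : ℕ} (hn : 0 < n) (A : Matrix (Fin n) (Fin n) ℝ) (hA : A.IsSymm)
    (a x₀ : Fin n → ℝ) (h₀ γ : ℝ) (hh₀ : 0 < h₀) (hγ : 0 < γ)
    (hbound : ∀ y : Fin n → ℝ, y ⬝ᵥ A.mulVec y ≤ γ * ∑ i, y i ^ 2)
    (ρ : ℝ) (hρ : 0 < ρ) (hργ : ρ ≤ 1 / γ) :
    let f : (Fin n → ℝ) → ℝ := fun x => (1 / 2) * (x ⬝ᵥ A.mulVec x) - a ⬝ᵥ x
    let xt := x₀ - ρ • (A.mulVec x₀ - a)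
    xt ≠ 0 → (∑ i, x₀ i ^ 2) = h₀ →
      f ((Real.sqrt h₀ / Real.sqrt (∑ i, xt i ^ 2)) • xt) ≤ f x₀ :=
  proximal_descent_general A hA a x₀ h₀ γ hγ hbound ρ hρ hργ
end

section
/- Let ι be a nonempty finite index set and let f, g : ι → ℝ with f(i) > 0 and g(i) > 0 for all i ∈ ι. If Σ_{i∈ι} f(i)·log g(i) ≥ Σ_{i∈ι} f(i)·log f(i), then Σ_{i∈ι} g(i) ≥ Σ_{i∈ι} f(i). -/
open Real

theorem Real.mul_log_sub_mul_log_le_sub {a b : ℝ} (ha : 0 < a) (hb : 0 < b) :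
    a * log b - a * log a ≤ b - a :=
  calc a * log b - a * log a = a * log (b / a) := by rw [log_div hb.ne' ha.ne']; ring
    _ ≤ a * (b / a - 1) := mul_le_mul_of_nonneg_left (log_le_sub_one_of_pos (div_pos hb ha)) ha.le
    _ = b - a := by field_simp

theorem em_monotonicity_general
    {ι : Type*} [Fintype ι] (f g : ι → ℝ)
    (hf : ∀ i, 0 < f i) (hg : ∀ i, 0 < g i)
    (h : ∑ i, f i * Real.log (g i) ≥ ∑ i, f i * Real.log (f i)) :
    ∑ i, g i ≥ ∑ i, f i := by
  have termwise := Finset.sum_le_sum fun i (_ : i ∈ Finset.univ) ↦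
    mul_log_sub_mul_log_le_sub (hf i) (hg i)
  simp only [Finset.sum_sub_distrib] at termwise
  linarith

/-- EM monotonicity principle used in Theorem 1: if the expected complete-data
log-likelihood does not decrease, Σ f·log g ≥ Σ f·log f, then the marginal likelihood
does not decrease, Σ g ≥ Σ f. -/
theorem em_monotonicity
    {ι : Type*} [Fintype ι] [Nonempty ι] (f g : ι → ℝ)
    (hf : ∀ i, 0 < f i) (hg : ∀ i, 0 < g i)
    (h : ∑ i, f i * Real.log (g i) ≥ ∑ i, f i * Real.log (f i)) :
    ∑ i, g i ≥ ∑ i, f i :=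
  em_monotonicity_general f g hf hg h
end
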